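/- Every ASM program P over ℱ is semantically equivalent to a flattened normal form: there exists an ASM program P′ = [P₁ ‖ ⋯ ‖ Pₘ] in which each Pᵢ is a nested conditional assignment of the form 'if C₁ then if C₂ then ⋯ then A', where A is an assignment or the empty parallel statement [], such that for every state X, Δ⁺_{P′}(X) = Δ⁺_P(X) and Γ_{P′}(X) = Γ_P(X). -/

import Mathlib

open scoped Classical

/-- Ground terms over a vocabulary `F`: a function symbol applied to a list of terms. -/
inductive GTerm (F : Type) : Type where
  | app : F → List (GTerm F) → GTerm F

/-- The subterm relation on ground terms. -/
inductive Subterm {F : Type} : GTerm F → GTerm F → Prop where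
  | refl (t : GTerm F) : Subterm t t
  | arg {s t : GTerm F} {f : F} {args : List (GTerm F)} :
      t ∈ args → Subterm s t → Subterm s (GTerm.app f args)

/-- A state: a first-order structure over vocabulary `F`, with base set drawn
from a common universe `U`, interpreting every function symbol. -/
structure State (F U : Type) where
  base : Set U
  interp : F → List U → U
  closed : ∀ (f : F) (as : List U), (∀ a ∈ as, a ∈ base) → interp f as ∈ base

mutual
/-- Value of a ground term in a state. -/
def evalT {F U : Type} (X : State F U) : GTerm F → U
  | GTerm.app f args => X.interp f (evalList X args)

/-- Values of a list of ground terms in a state. -/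
def evalList {F U : Type} (X : State F U) : List (GTerm F) → List U
  | [] => []
  | t :: ts => evalT X t :: evalList X ts
end

/-- The interpretation of the nullary symbol `trueS` in state `X`. -/
def tval {F U : Type} (trueS : F) (X : State F U) : U := X.interp trueS []

/-- The interpretation of the nullary symbol `falseS` in state `X`. -/
def fval {F U : Type} (falseS : F) (X : State F U) : U := X.interp falseS []

/-- `X ⊨ C`: the term `C` evaluates in `X` to the interpretation of true. -/
def Holds {F U : Type} (trueS : F) (X : State F U) (C : GTerm F) : Prop :=
  evalT X C = tval trueS X

/-- A location–value pair `f(ā) ↦ b`. -/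
abbrev Update (F U : Type) : Type := (F × List U) × U

/-- Two states agree on the values of all terms of `T`. -/
def AgreeOn {F U : Type} (T : Set (GTerm F)) (X Y : State F U) : Prop :=
  ∀ t ∈ T, evalT X t = evalT Y t

/-- A term takes opposite truth values in `X` and `Y`. -/
def OppVals {F U : Type} (trueS falseS : F) (s : GTerm F) (X Y : State F U) : Prop :=
  (evalT X s = tval trueS X ∧ evalT Y s = fval falseS Y) ∨
  (evalT X s = fval falseS X ∧ evalT Y s = tval trueS Y)

/-- `lt` is a strict partial order whose field is contained in `T`. -/
def StrictOrderOn {F : Type} (T : Set (GTerm F)) (lt : GTerm F → GTerm F → Prop) : Prop :=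
  (∀ s t, lt s t → s ∈ T ∧ t ∈ T) ∧ (∀ t, ¬ lt t t) ∧
  (∀ r s t, lt r s → lt s t → lt r t)

/-- Abstract state machine programs over vocabulary `F`. -/
inductive Prog (F : Type) : Type where
  | assign : F → List (GTerm F) → GTerm F → Prog F
  | par : List (Prog F) → Prog F
  | cond : GTerm F → Prog F → Prog F

mutual
/-- The raw set of updates proposed by an ASM program in a state. -/
def updSet {F U : Type} (trueS : F) : Prog F → State F U → Set (Update F U)
  | Prog.assign f ss t, X => {((f, evalList X ss), evalT X t)}
  | Prog.par Ps, X => updSetList trueS Ps X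
  | Prog.cond C P, X => {u | Holds trueS X C ∧ u ∈ updSet trueS P X}

def updSetList {F U : Type} (trueS : F) : List (Prog F) → State F U → Set (Update F U)
  | [], _ => ∅
  | P :: Ps, X => updSet trueS P X ∪ updSetList trueS Ps X
end

/-- The program proposes two conflicting updates of the same location. -/
def Clash {F U : Type} (trueS : F) (P : Prog F) (X : State F U) : Prop :=
  ∃ l b b', (l, b) ∈ updSet trueS P X ∧ (l, b') ∈ updSet trueS P X ∧ b ≠ b'

/-- The proposed update set `Δ⁺_P(X)`; `none` is `⊥` (a clash). -/
noncomputable def DeltaPlus {F U : Type} (trueS : F) (P : Prog F) (X : State F U) :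
    Option (Set (Update F U)) :=
  if Clash trueS P X then none else some (updSet trueS P X)

/-- The update set `Δ_P(X)` of an ASM program: `⊥` when `Δ⁺` is `∅` or `⊥`,
and otherwise `Δ⁺` with all trivial updates removed. -/
noncomputable def DeltaASM {F U : Type} (trueS : F) (P : Prog F) (X : State F U) :
    Option (Set (Update F U)) :=
  if Clash trueS P X ∨ updSet trueS P X = ∅ then none
  else some {u ∈ updSet trueS P X | X.interp u.1.1 u.1.2 ≠ u.2}

mutual
/-- Raw explore terms of an ASM program in a state (before closing under
subterms and adding true and false). -/
def gamma0 {F U : Type} (trueS : F) : Prog F → State F U → Set (GTerm F)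
  | Prog.assign _ ss t, _ => {x | x ∈ ss} ∪ {t}
  | Prog.par Ps, X => gamma0List trueS Ps X
  | Prog.cond C P, X => {C} ∪ {x | Holds trueS X C ∧ x ∈ gamma0 trueS P X}

def gamma0List {F U : Type} (trueS : F) : List (Prog F) → State F U → Set (GTerm F)
  | [], _ => ∅
  | P :: Ps, X => gamma0 trueS P X ∪ gamma0List trueS Ps X
end

/-- The explore set `Γ_P(X)` of an ASM program: the raw explore terms
together with true and false, closed under subterms. -/
def GammaASM {F U : Type} (trueS falseS : F) (P : Prog F) (X : State F U) : Set (GTerm F) :=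
  {s | ∃ t, (t ∈ gamma0 trueS P X ∨ t = GTerm.app trueS [] ∨ t = GTerm.app falseS []) ∧
    Subterm s t}

/-- The graph of a state, as a set of location–value pairs over its base set. -/
def State.graph {F U : Type} (X : State F U) : Set (Update F U) :=
  {u | (∀ a ∈ u.1.2, a ∈ X.base) ∧ u.2 = X.interp u.1.1 u.1.2}

/-- `ζ` is an isomorphism of `F`-structures from `X` to `Y`. -/
def IsIso {F U : Type} (ζ : U → U) (X Y : State F U) : Prop :=
  Set.BijOn ζ X.base Y.base ∧
  ∀ (f : F) (as : List U), (∀ a ∈ as, a ∈ X.base) →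
    Y.interp f (as.map ζ) = ζ (X.interp f as)

/-- A nested conditional assignment: `if C₁ then if C₂ then ⋯ then A`,
where `A` is an assignment or the empty parallel statement. -/
inductive NestedCondAssign {F : Type} : Prog F → Prop where
  | assign (f : F) (ss : List (GTerm F)) (t : GTerm F) :
      NestedCondAssign (Prog.assign f ss t)
  | skip : NestedCondAssign (Prog.par [])
  | cond {P : Prog F} (C : GTerm F) :
      NestedCondAssign P → NestedCondAssign (Prog.cond C P)

/-- The shared explore terms `Γ(V) = ⋂_{X ∈ V} Γ(X)` of a set of states. -/
def sharedGamma {F U : Type} (Γ : State F U → Set (GTerm F)) (V : Set (State F U)) :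
    Set (GTerm F) :=
  ⋂ X ∈ V, Γ X

/-- `V` is agreeable: all states in `V` agree on the values of all shared explore terms. -/
def Agreeable {F U : Type} (Γ : State F U → Set (GTerm F)) (V : Set (State F U)) : Prop :=
  ∀ X ∈ V, ∀ Y ∈ V, AgreeOn (sharedGamma Γ V) X Y

/-- `V` is uniform: all states in `V` have the same explore set. -/
def Uniform {F U : Type} (Γ : State F U → Set (GTerm F)) (V : Set (State F U)) : Prop :=
  ∀ X ∈ V, ∀ Y ∈ V, Γ X = Γ Y

/-- The Discrimination property of the order `lt` at state `X`: `lt` is a partial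
order on `Γ(X)` and for every state `Y` and every `t ∈ Γ(X) ∖ Γ(Y)` there is an
`s ∈ Γ(X)` with `s ≺_X t` taking opposite truth values in `X` and `Y`. -/
def Discriminates {F U : Type} (trueS falseS : F) (S : Set (State F U))
    (Γ : State F U → Set (GTerm F)) (X : State F U)
    (lt : GTerm F → GTerm F → Prop) : Prop :=
  StrictOrderOn (Γ X) lt ∧
  ∀ Y ∈ S, ∀ t ∈ Γ X \ Γ Y, ∃ s ∈ Γ X, lt s t ∧ OppVals trueS falseS s X Y

/-- An infinite sequence `X₁, X₂, …` of states and `s₁, s₂, …` of terms such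
that for all `i`, `s₁ ≺_{Xᵢ} s₂ ≺_{Xᵢ} ⋯ ≺_{Xᵢ} sᵢ`, where `sᵢ` takes opposite
truth values in `Xᵢ` and `Xⱼ` for every `j > i`. -/
def BadChain {F U : Type} (trueS falseS : F) (S : Set (State F U))
    (lt : State F U → GTerm F → GTerm F → Prop) : Prop :=
  ∃ (Xs : ℕ → State F U) (ss : ℕ → GTerm F),
    (∀ i, Xs i ∈ S) ∧
    (∀ i j, j < i → lt (Xs i) (ss j) (ss (j + 1))) ∧
    (∀ i j, i < j → OppVals trueS falseS (ss i) (Xs i) (Xs j))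

/-! Conditions are pushed inward and nested parallel blocks are concatenated:
`if C then [Q₁ ‖ ⋯ ‖ Qₘ]` becomes `[if C then [] ‖ if C then Q₁ ‖ ⋯ ‖ if C then Qₘ]`.
The raw update and explore sets of a parallel block are the unions over its components, so
this preserves both; `Δ⁺` (including the clash test) and `Γ` are computed from them alone. -/

namespace Prog

variable {F U : Type}

theorem induction_mem {motive : Prog F → Prop}
    (assign : ∀ f ss t, motive (.assign f ss t))
    (par : ∀ Ps, (∀ P ∈ Ps, motive P) → motive (.par Ps))
    (cond : ∀ C P, motive P → motive (.cond C P)) (P : Prog F) : motive P :=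
  Prog.rec (motive_2 := fun Ps => ∀ P ∈ Ps, motive P) assign par (fun C P ih => cond C P ih)
    (by simp) (fun P Ps hP hPs => by simpa using ⟨hP, hPs⟩) P

/-- The guard `cond C (par [])` keeps `C` explored even when `flatten P` is empty. -/
def flatten : Prog F → List (Prog F)
  | assign f ss t => [assign f ss t]
  | par Ps => Ps.flatMap flatten
  | cond C P => cond C (par []) :: (flatten P).map (cond C)

theorem nestedCondAssign_of_mem_flatten {P Q : Prog F} (hQ : Q ∈ flatten P) :
    NestedCondAssign Q := by
  induction P using Prog.induction_mem generalizing Q with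
  | assign f ss t =>
    rw [flatten, List.mem_singleton] at hQ
    exact hQ ▸ .assign f ss t
  | par Ps ih =>
    rw [flatten, List.mem_flatMap] at hQ
    obtain ⟨P, hP, hQ⟩ := hQ
    exact ih P hP hQ
  | cond C P ih =>
    rw [flatten, List.mem_cons] at hQ
    rcases hQ with rfl | hQ
    · exact .cond C .skip
    · obtain ⟨R, hR, rfl⟩ := List.mem_map.mp hQ
      exact .cond C (ih hR)

variable (trueS : F) (X : State F U)

theorem updSet_par (Ps : List (Prog F)) :
    updSet trueS (par Ps) X = ⋃ P ∈ Ps, updSet trueS P X := by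
  rw [updSet]
  induction Ps with
  | nil => simp [updSetList]
  | cons P Ps ih => simp [updSetList, ih]

theorem gamma0_par (Ps : List (Prog F)) :
    gamma0 trueS (par Ps) X = ⋃ P ∈ Ps, gamma0 trueS P X := by
  rw [gamma0]
  induction Ps with
  | nil => simp [gamma0List]
  | cons P Ps ih => simp [gamma0List, ih]

theorem updSet_cond (C : GTerm F) (P : Prog F) :
    updSet trueS (cond C P) X = {u | Holds trueS X C ∧ u ∈ updSet trueS P X} := by
  rw [updSet]

theorem gamma0_cond (C : GTerm F) (P : Prog F) :
    gamma0 trueS (cond C P) X = {C} ∪ {t | Holds trueS X C ∧ t ∈ gamma0 trueS P X} := by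
  rw [gamma0]

theorem updSet_par_flatMap (Ps : List (Prog F)) (f : Prog F → List (Prog F)) :
    updSet trueS (par (Ps.flatMap f)) X = ⋃ P ∈ Ps, updSet trueS (par (f P)) X := by
  ext u
  simp only [updSet_par, Set.mem_iUnion, List.mem_flatMap]
  grind

theorem gamma0_par_flatMap (Ps : List (Prog F)) (f : Prog F → List (Prog F)) :
    gamma0 trueS (par (Ps.flatMap f)) X = ⋃ P ∈ Ps, gamma0 trueS (par (f P)) X := by
  ext u
  simp only [gamma0_par, Set.mem_iUnion, List.mem_flatMap]
  grind

theorem updSet_par_skip_map_cond (C : GTerm F) (Qs : List (Prog F)) :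
    updSet trueS (par (cond C (par []) :: Qs.map (cond C))) X =
      updSet trueS (cond C (par Qs)) X := by
  ext u
  simp [updSet_par, updSet_cond]

theorem gamma0_par_skip_map_cond (C : GTerm F) (Qs : List (Prog F)) :
    gamma0 trueS (par (cond C (par []) :: Qs.map (cond C))) X =
      gamma0 trueS (cond C (par Qs)) X := by
  ext t
  simp only [gamma0_par, gamma0_cond, Set.mem_iUnion, exists_prop, List.mem_cons, List.mem_map,
    exists_eq_or_imp, exists_exists_and_eq_and, Set.mem_union, Set.mem_singleton_iff,
    Set.mem_ofPred_eq]
  grind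

theorem updSet_par_flatten (P : Prog F) : updSet trueS (par (flatten P)) X = updSet trueS P X := by
  induction P using Prog.induction_mem with
  | assign f ss t => simp [flatten, updSet_par]
  | par Ps ih => rw [flatten, updSet_par_flatMap, updSet_par]; exact Set.iUnion₂_congr ih
  | cond C P ih => rw [flatten, updSet_par_skip_map_cond, updSet_cond, updSet_cond, ih]

theorem gamma0_par_flatten (P : Prog F) : gamma0 trueS (par (flatten P)) X = gamma0 trueS P X := by
  induction P using Prog.induction_mem with
  | assign f ss t => simp [flatten, gamma0_par]
  | par Ps ih => rw [flatten, gamma0_par_flatMap, gamma0_par]; exact Set.iUnion₂_congr ih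
  | cond C P ih => rw [flatten, gamma0_par_skip_map_cond, gamma0_cond, gamma0_cond, ih]

end Prog

open Prog

/-- Every ASM program is semantically equivalent to a flattened normal form: a
parallel combination of nested conditional assignments with the same proposed
update set and the same explore set at every state. -/
theorem asm_flattening {F U : Type} [Finite F] (trueS falseS : F) (P : Prog F) :
    ∃ Ps : List (Prog F),
      (∀ Q ∈ Ps, NestedCondAssign Q) ∧
      ∀ X : State F U,
        DeltaPlus trueS (Prog.par Ps) X = DeltaPlus trueS P X ∧
        GammaASM trueS falseS (Prog.par Ps) X = GammaASM trueS falseS P X :=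
  ⟨flatten P, fun _ => nestedCondAssign_of_mem_flatten, fun X =>
    ⟨by rw [DeltaPlus, DeltaPlus, Clash, Clash, updSet_par_flatten],
      by rw [GammaASM, GammaASM, gamma0_par_flatten]⟩⟩
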